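/- (Theorem 1, deterministic core, made precise.) Let d, n be positive natural numbers, μ ∈ ℝ^d with μ ≠ 0, σ > 0, c ≥ 0, and B ≥ 0. Let x₁,…,xₙ ∈ ℝ^d satisfy the extrapolation constraint ∑_{i=1}^n |2⟨x_i,μ⟩| ≤ nσ²c, and set θ₂ = −(1/n)∑_{i=1}^n x_i − μ. Let θ₁ ∈ ℝ^d satisfy the concentration events ‖θ₁‖² ≤ B and |⟨μ,θ₁⟩| ≤ σ^{1/2}‖μ‖^{3/2}, and assume ‖θ₂‖² ≤ B. Assume further the numerator condition σ^{1/2}‖μ‖^{3/2} + σ²·c/2 ≤ ‖μ‖². Set θ* = μ + (1/2)θ₁ + (1/2)θ₂ and assume θ* ≠ 0. Then ⟨μ, θ*⟩ / (σ‖θ*‖) ≥ (‖μ‖² − σ^{1/2}‖μ‖^{3/2} − σ²·c/2) / (4σ·√(B + ‖μ‖²)). -/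
import Mathlib


open scoped InnerProductSpace

set_option maxHeartbeats 1000000 in
/-- Theorem 1 (deterministic core, balanced case, made precise): under the extrapolation
constraint and the concentration events, the normalized margin of `θ* = μ + θ₁/2 + θ₂/2` is
bounded below:
`⟨μ, θ*⟩ / (σ‖θ*‖) ≥ (‖μ‖² − σ^{1/2}‖μ‖^{3/2} − σ²c/2) / (4σ√(B + ‖μ‖²))`. -/
theorem divOE_margin_lower_bound
    (d n : ℕ) (hd : 0 < d) (hn : 0 < n)
    (μ : EuclideanSpace ℝ (Fin d)) (hμ : μ ≠ 0)
    (σ : ℝ) (hσ : 0 < σ) (c : ℝ) (hc : 0 ≤ c) (B : ℝ) (hB : 0 ≤ B)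
    (x : Fin n → EuclideanSpace ℝ (Fin d))
    (hx : ∑ i, |2 * ⟪x i, μ⟫_ℝ| ≤ n * σ ^ 2 * c)
    (θ₂ : EuclideanSpace ℝ (Fin d))
    (hθ₂ : θ₂ = -((1 / (n : ℝ)) • ∑ i, x i) - μ)
    (θ₁ : EuclideanSpace ℝ (Fin d))
    (hθ₁B : ‖θ₁‖ ^ 2 ≤ B)
    (hθ₁μ : |⟪μ, θ₁⟫_ℝ| ≤ σ ^ ((1 : ℝ) / 2) * ‖μ‖ ^ ((3 : ℝ) / 2))
    (hθ₂B : ‖θ₂‖ ^ 2 ≤ B)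
    (hnum : σ ^ ((1 : ℝ) / 2) * ‖μ‖ ^ ((3 : ℝ) / 2) + σ ^ 2 * c / 2 ≤ ‖μ‖ ^ 2)
    (θs : EuclideanSpace ℝ (Fin d))
    (hθs : θs = μ + (1 / 2 : ℝ) • θ₁ + (1 / 2 : ℝ) • θ₂) (hθsne : θs ≠ 0) :
    (‖μ‖ ^ 2 - σ ^ ((1 : ℝ) / 2) * ‖μ‖ ^ ((3 : ℝ) / 2) - σ ^ 2 * c / 2)
        / (4 * σ * Real.sqrt (B + ‖μ‖ ^ 2))
      ≤ ⟪μ, θs⟫_ℝ / (σ * ‖θs‖) := by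
  have hμpos : (0 : ℝ) < ‖μ‖ := norm_pos_iff.mpr hμ
  have hnpos : (0 : ℝ) < (n : ℝ) := by exact_mod_cast hn
  set N : ℝ := ‖μ‖ ^ 2 - σ ^ ((1 : ℝ) / 2) * ‖μ‖ ^ ((3 : ℝ) / 2) - σ ^ 2 * c / 2 with hN
  have hN0 : 0 ≤ N := by rw [hN]; linarith
  have hsqrtpos : 0 < Real.sqrt (B + ‖μ‖ ^ 2) :=
    Real.sqrt_pos.mpr (by positivity)
  -- sum bound
  have hsum : |∑ i, ⟪x i, μ⟫_ℝ| ≤ (n : ℝ) * σ ^ 2 * c / 2 := by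
    calc |∑ i, ⟪x i, μ⟫_ℝ| ≤ ∑ i, |⟪x i, μ⟫_ℝ| := Finset.abs_sum_le_sum_abs _ _
      _ = (∑ i, |2 * ⟪x i, μ⟫_ℝ|) / 2 := by
          rw [Finset.sum_div]
          refine Finset.sum_congr rfl fun i _ => ?_
          rw [abs_mul]; norm_num
      _ ≤ (n : ℝ) * σ ^ 2 * c / 2 := by linarith
  -- inner product formula
  have hinner : ⟪μ, θs⟫_ℝ
      = ‖μ‖ ^ 2 / 2 + ⟪μ, θ₁⟫_ℝ / 2 - (∑ i, ⟪x i, μ⟫_ℝ) / (2 * n) := by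
    subst hθs hθ₂
    simp only [inner_add_right, inner_smul_right, inner_sub_right, inner_neg_right,
      inner_sum, real_inner_self_eq_norm_sq]
    have : ∀ i, ⟪μ, x i⟫_ℝ = ⟪x i, μ⟫_ℝ := fun i => real_inner_comm _ _
    simp only [this]
    field_simp
    ring
  have hinner_lb : N / 2 ≤ ⟪μ, θs⟫_ℝ := by
    rw [hinner, hN]
    have h1 : -(σ ^ ((1 : ℝ) / 2) * ‖μ‖ ^ ((3 : ℝ) / 2)) ≤ ⟪μ, θ₁⟫_ℝ :=
      neg_le_of_abs_le hθ₁μ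
    have h2 : (∑ i, ⟪x i, μ⟫_ℝ) ≤ (n : ℝ) * σ ^ 2 * c / 2 :=
      le_of_abs_le hsum
    have h3 : (∑ i, ⟪x i, μ⟫_ℝ) / (2 * n) ≤ σ ^ 2 * c / 4 := by
      rw [div_le_iff₀ (by positivity)]
      nlinarith
    linarith
  -- norm bounds
  have hθ1n : ‖θ₁‖ ≤ Real.sqrt B := by
    rw [← Real.sqrt_sq (norm_nonneg θ₁)]
    exact Real.sqrt_le_sqrt hθ₁B
  have hθ2n : ‖θ₂‖ ≤ Real.sqrt B := by
    rw [← Real.sqrt_sq (norm_nonneg θ₂)]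
    exact Real.sqrt_le_sqrt hθ₂B
  have hμs : ‖μ‖ ≤ Real.sqrt (B + ‖μ‖ ^ 2) := by
    nlinarith [Real.sq_sqrt (show (0:ℝ) ≤ B + ‖μ‖ ^ 2 by positivity),
      Real.sqrt_nonneg (B + ‖μ‖ ^ 2), norm_nonneg μ]
  have hBs : Real.sqrt B ≤ Real.sqrt (B + ‖μ‖ ^ 2) :=
    Real.sqrt_le_sqrt (by nlinarith)
  have hθsn : ‖θs‖ ≤ 2 * Real.sqrt (B + ‖μ‖ ^ 2) := by
    have h := norm_add₃_le (a := μ) (b := (1 / 2 : ℝ) • θ₁) (c := (1 / 2 : ℝ) • θ₂)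
    rw [← hθs] at h
    rw [norm_smul, norm_smul] at h
    have h12 : ‖(1 / 2 : ℝ)‖ = 1 / 2 := by norm_num
    rw [h12] at h
    linarith
  have hθspos : 0 < ‖θs‖ := norm_pos_iff.mpr hθsne
  calc N / (4 * σ * Real.sqrt (B + ‖μ‖ ^ 2))
      = (N / 2) / (σ * (2 * Real.sqrt (B + ‖μ‖ ^ 2))) := by ring
    _ ≤ (N / 2) / (σ * ‖θs‖) := by
        apply div_le_div_of_nonneg_left (by linarith) (by positivity)
        exact mul_le_mul_of_nonneg_left hθsn (le_of_lt hσ)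
    _ ≤ ⟪μ, θs⟫_ℝ / (σ * ‖θs‖) := by
        apply div_le_div_of_nonneg_right hinner_lb (by positivity)
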